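/- Let G and H be graphs with G connected and |V(G)|, |V(H)| ≥ 2. Then the edge-connectivity of the lexicographic product satisfies λ(G ∘ H) = min{ λ(G)·|V(H)|², δ(H) + δ(G)·|V(H)| }. -/

import Mathlib

open Classical

variable {V W : Type*}

/-- An `S`-Steiner tree: a subgraph of `G` that is a tree and contains `S`. -/
def IsSteinerTree (G : SimpleGraph V) (S : Set V) (T : G.Subgraph) : Prop :=
  S ⊆ T.verts ∧ T.coe.IsTree

/-- There exist `n` pairwise edge-disjoint `S`-Steiner trees in `G`. -/
def HasSteinerPacking (G : SimpleGraph V) (S : Set V) (n : ℕ) : Prop :=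
  ∃ T : Fin n → G.Subgraph, (∀ i, IsSteinerTree G S (T i)) ∧
    ∀ i j, i ≠ j → (T i).edgeSet ∩ (T j).edgeSet = ∅

/-- `λ(S)`: maximum number of pairwise edge-disjoint `S`-Steiner trees. -/
noncomputable def steinerNum (G : SimpleGraph V) (S : Set V) : ℕ :=
  sSup {n | HasSteinerPacking G S n}

/-- Generalized `k`-edge-connectivity `λ_k(G)`. -/
noncomputable def genEdgeConn (G : SimpleGraph V) (k : ℕ) : ℕ :=
  sInf {m | ∃ S : Set V, S.Finite ∧ S.ncard = k ∧ steinerNum G S = m}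

/-- Edge-connectivity: minimum number of edges whose deletion disconnects `G`. -/
noncomputable def edgeConn (G : SimpleGraph V) : ℕ :=
  sInf {m | ∃ F : Set (Sym2 V), F ⊆ G.edgeSet ∧ F.ncard = m ∧ ¬ (G.deleteEdges F).Connected}

/-- Degree of a vertex as the cardinality of its neighbor set. -/
noncomputable def degOf (G : SimpleGraph V) (v : V) : ℕ :=
  (G.neighborSet v).ncard

/-- Minimum degree. -/
noncomputable def minDeg (G : SimpleGraph V) : ℕ :=
  sInf {d | ∃ v, degOf G v = d}

/-- The lexicographic product `G ∘ H`. -/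
def lexProd (G : SimpleGraph V) (H : SimpleGraph W) : SimpleGraph (V × W) where
  Adj p q := G.Adj p.1 q.1 ∨ (p.1 = q.1 ∧ H.Adj p.2 q.2)
  symm := by
    constructor
    rintro p q (h | ⟨h1, h2⟩)
    · exact Or.inl h.symm
    · exact Or.inr ⟨h1.symm, h2.symm⟩
  loopless := by
    constructor
    rintro p (h | ⟨_, h⟩)
    · exact G.irrefl h
    · exact H.irrefl h

/-!
The edge-connectivity of a finite graph is the least size of an edge boundary `∂A` with `A`
neither empty nor everything. The upper bounds come from `A = S × V(H)` for a minimum cut `S`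
of `G` and from a single vertex `(u, v)` with `u`, `v` of minimum degree. Conversely, let `A` be
any such set. If no fibre `{u} × V(H)` is split by `A`, then `A = S × V(H)` and
`|∂A| = |∂_G S| · |V(H)|²`. Otherwise, after possibly replacing `A` by its complement, a fibre
meets `A` in `a ≥ 1` vertices and misses it in at least `a`. Each vertex of `N_G(u) × V(H)` is
joined to the whole fibre and so contributes at least `a` edges of `∂A`, and a vertex `v` of the
fibre in `A` has at least `deg_H(v) - (a - 1)` neighbours in the fibre outside `A`. Hence
`|∂A| ≥ a · deg(u) |V(H)| + δ(H) - (a - 1) ≥ δ(H) + δ(G) |V(H)|` when `δ(G) ≥ 1`; when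
`δ(G) = 0` already `λ(G) ≤ δ(G) = 0`.
-/

namespace SimpleGraph

variable {α : Type*} (Γ : SimpleGraph α)

/-- The cut edges of `A`, as ordered pairs: their orientation is fixed by `A`, so each edge is
counted once. -/
def edgeBoundary (A : Set α) : Set (α × α) :=
  {pq | Γ.Adj pq.1 pq.2 ∧ pq.1 ∈ A ∧ pq.2 ∉ A}

variable {Γ}

lemma edgeBoundary_compl (A : Set α) :
    Γ.edgeBoundary Aᶜ = Prod.swap '' Γ.edgeBoundary A := by
  ext ⟨p, q⟩
  simp only [edgeBoundary, Set.mem_image, Set.mem_compl_iff, not_not,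
    Prod.exists, Prod.swap_prod_mk, Prod.mk.injEq]
  constructor
  · rintro ⟨h, hp, hq⟩
    exact ⟨q, p, ⟨h.symm, hq, hp⟩, rfl, rfl⟩
  · rintro ⟨q, p, ⟨h, hq, hp⟩, rfl, rfl⟩
    exact ⟨h.symm, hp, hq⟩

lemma ncard_edgeBoundary_compl (A : Set α) :
    (Γ.edgeBoundary Aᶜ).ncard = (Γ.edgeBoundary A).ncard := by
  rw [edgeBoundary_compl, Set.ncard_image_of_injective _ Prod.swap_injective]

lemma Reachable.mem_of_edgeBoundary_subset {A : Set α} {F : Set (Sym2 α)}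
    (hF : ∀ pq ∈ Γ.edgeBoundary A, s(pq.1, pq.2) ∈ F) {x y : α}
    (h : (Γ.deleteEdges F).Reachable x y) (hx : x ∈ A) : y ∈ A := by
  obtain ⟨w⟩ := h
  induction w with
  | nil => exact hx
  | cons hadj _ ih =>
    rw [deleteEdges_adj] at hadj
    exact ih (by_contra fun hq => hadj.2 (hF (_, _) ⟨hadj.1, hx, hq⟩))

lemma not_connected_deleteEdges {A : Set α} {F : Set (Sym2 α)}
    (hF : ∀ pq ∈ Γ.edgeBoundary A, s(pq.1, pq.2) ∈ F) {x y : α} (hx : x ∈ A) (hy : y ∉ A) :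
    ¬ (Γ.deleteEdges F).Connected :=
  fun h => hy ((h.preconnected x y).mem_of_edgeBoundary_subset hF hx)

lemma ncard_edgeBoundary_le [Finite α] {A : Set α} {F : Set (Sym2 α)}
    (hF : ∀ pq ∈ Γ.edgeBoundary A, s(pq.1, pq.2) ∈ F) :
    (Γ.edgeBoundary A).ncard ≤ F.ncard := by
  refine Set.ncard_le_ncard_of_injOn _ hF ?_
  rintro ⟨p, q⟩ ⟨-, hp, -⟩ ⟨p', q'⟩ ⟨-, -, hq'⟩ h
  rcases Sym2.eq_iff.mp h with ⟨rfl, rfl⟩ | ⟨rfl, rfl⟩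
  · rfl
  · exact absurd hp hq'

lemma edgeBoundary_singleton (v : α) :
    Γ.edgeBoundary {v} = Prod.mk v '' Γ.neighborSet v := by
  ext ⟨p, q⟩
  simp only [edgeBoundary, Set.mem_singleton_iff, Set.mem_image,
    mem_neighborSet, Prod.mk.injEq]
  constructor
  · rintro ⟨hadj, rfl, -⟩
    exact ⟨q, hadj, rfl, rfl⟩
  · rintro ⟨q, hadj, rfl, rfl⟩
    exact ⟨hadj, rfl, hadj.ne'⟩

end SimpleGraph

open SimpleGraph

section EdgeConnectivity

variable {α : Type*} (Γ : SimpleGraph α)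

lemma edgeConn_le_ncard {F : Set (Sym2 α)} (hFE : F ⊆ Γ.edgeSet)
    (hF : ¬ (Γ.deleteEdges F).Connected) : edgeConn Γ ≤ F.ncard :=
  Nat.sInf_le ⟨F, hFE, rfl, hF⟩

lemma exists_degOf_eq_minDeg [Nonempty α] : ∃ v, degOf Γ v = minDeg Γ :=
  Nat.sInf_mem (s := {d | ∃ v, degOf Γ v = d}) ⟨_, Classical.arbitrary α, rfl⟩

lemma minDeg_le_degOf (v : α) : minDeg Γ ≤ degOf Γ v :=
  Nat.sInf_le ⟨v, rfl⟩

variable [Fintype α]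

lemma edgeConn_le_ncard_edgeBoundary {A : Set α} {x y : α} (hx : x ∈ A) (hy : y ∉ A) :
    edgeConn Γ ≤ (Γ.edgeBoundary A).ncard := by
  set F := (fun pq : α × α => s(pq.1, pq.2)) '' Γ.edgeBoundary A
  have hF : ∀ pq ∈ Γ.edgeBoundary A, s(pq.1, pq.2) ∈ F := fun pq h => ⟨pq, h, rfl⟩
  have hFE : F ⊆ Γ.edgeSet := by
    rintro _ ⟨pq, ⟨hadj, -⟩, rfl⟩
    exact hadj
  exact (edgeConn_le_ncard Γ hFE (Γ.not_connected_deleteEdges hF hx hy)).trans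
    Set.ncard_image_le

lemma exists_ncard_edgeBoundary_le_edgeConn (h : 2 ≤ Fintype.card α) :
    ∃ (A : Set α) (x y : α), x ∈ A ∧ y ∉ A ∧ (Γ.edgeBoundary A).ncard ≤ edgeConn Γ := by
  obtain ⟨a, b, hab⟩ := Fintype.exists_pair_of_one_lt_card h
  have hne : {m | ∃ F : Set (Sym2 α), F ⊆ Γ.edgeSet ∧ F.ncard = m ∧
      ¬ (Γ.deleteEdges F).Connected}.Nonempty :=
    ⟨_, Γ.edgeSet, subset_rfl, rfl,
      Γ.not_connected_deleteEdges (A := {a}) (fun pq h => h.1) rfl hab.symm⟩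
  obtain ⟨F, -, hcard, hF⟩ := Nat.sInf_mem hne
  have : Nonempty α := ⟨a⟩
  have hpre : ¬ (Γ.deleteEdges F).Preconnected := fun hp => hF ⟨hp⟩
  simp only [Preconnected, not_forall] at hpre
  obtain ⟨x, y, hxy⟩ := hpre
  refine ⟨{z | (Γ.deleteEdges F).Reachable x z}, x, y, Reachable.refl x, hxy, ?_⟩
  rw [edgeConn, ← hcard]
  refine ncard_edgeBoundary_le fun pq ⟨hadj, hp, hq⟩ => by_contra fun hmem => hq ?_
  exact hp.trans (Adj.reachable ((deleteEdges_adj ..).mpr ⟨hadj, hmem⟩))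

lemma edgeConn_le_degOf (h : 2 ≤ Fintype.card α) (v : α) : edgeConn Γ ≤ degOf Γ v := by
  obtain ⟨y, hy⟩ := Fintype.exists_ne_of_one_lt_card h v
  have := edgeConn_le_ncard_edgeBoundary Γ (Set.mem_singleton v) hy
  rwa [edgeBoundary_singleton, Set.ncard_image_of_injective _ (Prod.mk_right_injective v)] at this

end EdgeConnectivity

section LexProd

variable (G : SimpleGraph V) (H : SimpleGraph W)

lemma lexProd_neighborSet (u : V) (v : W) :
    (lexProd G H).neighborSet (u, v) =
      G.neighborSet u ×ˢ Set.univ ∪ {u} ×ˢ H.neighborSet v := by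
  ext ⟨u', w'⟩
  simp only [mem_neighborSet, lexProd, Set.mem_union, Set.mem_prod, Set.mem_univ, and_true,
    Set.mem_singleton_iff, eq_comm]

lemma edgeBoundary_lexProd_prod_univ (S : Set V) :
    (lexProd G H).edgeBoundary (S ×ˢ Set.univ) =
      Equiv.prodProdProdComm V V W W '' (G.edgeBoundary S ×ˢ Set.univ) := by
  ext ⟨⟨a, w⟩, ⟨b, w'⟩⟩
  simp only [edgeBoundary, Set.mem_ofPred_eq, lexProd, Set.mem_prod, Set.mem_univ, and_true,
    Set.mem_image, Prod.exists, Equiv.prodProdProdComm_apply, Prod.mk.injEq]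
  constructor
  · rintro ⟨hadj | ⟨rfl, -⟩, ha, hb⟩
    · exact ⟨a, b, w, w', ⟨hadj, ha, hb⟩, ⟨rfl, rfl⟩, rfl, rfl⟩
    · exact absurd ha hb
  · rintro ⟨a, b, w, w', ⟨hadj, ha, hb⟩, ⟨rfl, rfl⟩, rfl, rfl⟩
    exact ⟨Or.inl hadj, ha, hb⟩

variable [Fintype W]

lemma ncard_edgeBoundary_lexProd_prod_univ (S : Set V) :
    ((lexProd G H).edgeBoundary (S ×ˢ Set.univ)).ncard =
      (G.edgeBoundary S).ncard * Fintype.card W ^ 2 := by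
  rw [edgeBoundary_lexProd_prod_univ, Set.ncard_image_of_injective _ (Equiv.injective _),
    Set.ncard_prod, Set.ncard_univ, Nat.card_eq_fintype_card, Fintype.card_prod, sq]

variable [Fintype V]

lemma degOf_lexProd (u : V) (v : W) :
    degOf (lexProd G H) (u, v) = degOf G u * Fintype.card W + degOf H v := by
  have hdisj : Disjoint (G.neighborSet u ×ˢ (Set.univ : Set W)) ({u} ×ˢ H.neighborSet v) :=
    Set.disjoint_left.mpr fun p h1 h2 => (h1.1 : G.Adj u p.1).ne' h2.1
  rw [degOf, lexProd_neighborSet, Set.ncard_union_eq hdisj, Set.ncard_prod, Set.ncard_prod,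
    Set.ncard_univ, Nat.card_eq_fintype_card, Set.ncard_singleton, one_mul, degOf, degOf]

lemma edgeConn_lexProd_le [Nonempty W] (hV : 2 ≤ Fintype.card V) :
    edgeConn (lexProd G H) ≤ edgeConn G * Fintype.card W ^ 2 := by
  obtain ⟨S, x, y, hx, hy, hS⟩ := exists_ncard_edgeBoundary_le_edgeConn G hV
  obtain ⟨w⟩ := ‹Nonempty W›
  calc edgeConn (lexProd G H)
      ≤ ((lexProd G H).edgeBoundary (S ×ˢ Set.univ)).ncard :=
        edgeConn_le_ncard_edgeBoundary _ (x := (x, w)) (y := (y, w)) ⟨hx, trivial⟩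
          fun h => hy h.1
    _ ≤ edgeConn G * Fintype.card W ^ 2 := by
        rw [ncard_edgeBoundary_lexProd_prod_univ]
        exact Nat.mul_le_mul_right _ hS

lemma edgeConn_lexProd_le_minDeg_add [Nonempty V] (hW : 2 ≤ Fintype.card W) :
    edgeConn (lexProd G H) ≤ minDeg H + minDeg G * Fintype.card W := by
  obtain ⟨u, hu⟩ := exists_degOf_eq_minDeg G
  have : Nonempty W := Fintype.card_pos_iff.mp (by omega)
  obtain ⟨v, hv⟩ := exists_degOf_eq_minDeg H
  have hcard : 2 ≤ Fintype.card (V × W) := by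
    rw [Fintype.card_prod]
    nlinarith [Fintype.card_pos (α := V)]
  have := edgeConn_le_degOf (lexProd G H) hcard (u, v)
  rwa [degOf_lexProd, hu, hv, add_comm] at this

lemma ncard_mul_add_ncard_mul_le_ncard_edgeBoundary_lexProd (A : Set (V × W)) (u : V) :
    ((G.neighborSet u ×ˢ Set.univ) ∩ A).ncard * (Prod.mk u ⁻¹' A)ᶜ.ncard +
        ((G.neighborSet u ×ˢ Set.univ) \ A).ncard * (Prod.mk u ⁻¹' A).ncard ≤
      ((lexProd G H).edgeBoundary A \ {pq | pq.1.1 = pq.2.1}).ncard := by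
  set N : Set (V × W) := G.neighborSet u ×ˢ Set.univ
  set I₁ := (fun zw : (V × W) × W => (zw.1, (u, zw.2))) '' ((N ∩ A) ×ˢ (Prod.mk u ⁻¹' A)ᶜ)
  set I₂ := (fun zw : (V × W) × W => ((u, zw.2), zw.1)) '' ((N \ A) ×ˢ (Prod.mk u ⁻¹' A))
  have hI₁ : I₁.ncard = ((N ∩ A) ×ˢ (Prod.mk u ⁻¹' A)ᶜ).ncard :=
    Set.ncard_image_of_injective _ fun x y h => by
      simp only [Prod.mk.injEq] at h
      exact Prod.ext h.1 h.2.2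
  have hI₂ : I₂.ncard = ((N \ A) ×ˢ (Prod.mk u ⁻¹' A)).ncard :=
    Set.ncard_image_of_injective _ fun x y h => by
      simp only [Prod.mk.injEq] at h
      exact Prod.ext h.2 h.1.2
  have hdisj : Disjoint I₁ I₂ := by
    refine Set.disjoint_left.mpr ?_
    rintro _ ⟨⟨z, w⟩, ⟨⟨hz, -⟩, -⟩, rfl⟩ ⟨⟨z', w'⟩, -, h⟩
    exact (hz.1 : G.Adj u z.1).ne' (congrArg (·.1.1) h).symm
  have hsub : I₁ ∪ I₂ ⊆ (lexProd G H).edgeBoundary A \ {pq | pq.1.1 = pq.2.1} := by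
    rintro _ (⟨⟨z, w⟩, ⟨⟨hz, hzA⟩, hw⟩, rfl⟩ | ⟨⟨z, w⟩, ⟨⟨hz, hzA⟩, hw⟩, rfl⟩)
    · exact ⟨⟨Or.inl (hz.1 : G.Adj u z.1).symm, hzA, hw⟩, (hz.1 : G.Adj u z.1).ne'⟩
    · exact ⟨⟨Or.inl hz.1, hw, hzA⟩, (hz.1 : G.Adj u z.1).ne⟩
  calc _ = (I₁ ∪ I₂).ncard := by
        rw [Set.ncard_union_eq hdisj, hI₁, hI₂, Set.ncard_prod, Set.ncard_prod]
    _ ≤ _ := Set.ncard_le_ncard hsub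

lemma ncard_compl_inter_neighborSet_le_ncard_edgeBoundary_lexProd {A : Set (V × W)} {u : V}
    {v : W} (hv : (u, v) ∈ A) :
    ((Prod.mk u ⁻¹' A)ᶜ ∩ H.neighborSet v).ncard ≤
      ((lexProd G H).edgeBoundary A ∩ {pq | pq.1.1 = pq.2.1}).ncard := by
  refine Set.ncard_le_ncard_of_injOn (fun w => ((u, v), (u, w))) ?_ ?_
  · rintro w ⟨hw, hadj⟩
    exact ⟨⟨Or.inr ⟨rfl, hadj⟩, hv, hw⟩, rfl⟩
  · intro w _ w' _ h
    exact congrArg (·.2.2) h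

lemma minDeg_add_le_ncard_edgeBoundary_lexProd (hδ : 0 < minDeg G) {A : Set (V × W)} {u : V}
    {v : W} (hv : (u, v) ∈ A) (hA : (Prod.mk u ⁻¹' A).ncard ≤ (Prod.mk u ⁻¹' A)ᶜ.ncard) :
    minDeg H + minDeg G * Fintype.card W ≤ ((lexProd G H).edgeBoundary A).ncard := by
  set N : Set (V × W) := G.neighborSet u ×ˢ Set.univ
  set a := (Prod.mk u ⁻¹' A).ncard
  set c := ((Prod.mk u ⁻¹' A)ᶜ ∩ H.neighborSet v).ncard
  set k := degOf G u * Fintype.card W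
  have hN : (N ∩ A).ncard + (N \ A).ncard = k := by
    rw [Set.ncard_inter_add_ncard_sdiff_eq_ncard, Set.ncard_prod, Set.ncard_univ,
      Nat.card_eq_fintype_card]
    rfl
  have hcross := ncard_mul_add_ncard_mul_le_ncard_edgeBoundary_lexProd G H A u
  have hfiber := ncard_compl_inter_neighborSet_le_ncard_edgeBoundary_lexProd G H hv
  have hsplit := Set.ncard_inter_add_ncard_sdiff_eq_ncard ((lexProd G H).edgeBoundary A)
    {pq | pq.1.1 = pq.2.1}
  have hdegH : degOf H v + 1 ≤ a + c := by
    have hcover : H.neighborSet v ⊆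
        (Prod.mk u ⁻¹' A \ {v}) ∪ ((Prod.mk u ⁻¹' A)ᶜ ∩ H.neighborSet v) := by
      intro w hw
      by_cases hwA : w ∈ Prod.mk u ⁻¹' A
      · exact Or.inl ⟨hwA, (hw : H.Adj v w).ne'⟩
      · exact Or.inr ⟨hwA, hw⟩
    have := (Set.ncard_le_ncard hcover).trans (Set.ncard_union_le _ _)
    have := Set.ncard_sdiff_singleton_add_one (show v ∈ Prod.mk u ⁻¹' A from hv)
    rw [degOf]
    omega
  have hδH := minDeg_le_degOf H v
  have hk : minDeg G * Fintype.card W ≤ k := Nat.mul_le_mul_right _ (minDeg_le_degOf G u)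
  have hk1 : 1 ≤ minDeg G * Fintype.card W := Nat.mul_pos hδ (Fintype.card_pos_iff.mpr ⟨v⟩)
  have ha : 1 ≤ a := (Set.ncard_pos).mpr ⟨v, hv⟩
  nlinarith [Nat.mul_le_mul_left (N ∩ A).ncard hA]

lemma min_le_ncard_edgeBoundary_lexProd (hδ : 0 < minDeg G) {A : Set (V × W)}
    {x y : V × W} (hx : x ∈ A) (hy : y ∉ A) :
    min (edgeConn G * Fintype.card W ^ 2) (minDeg H + minDeg G * Fintype.card W) ≤
      ((lexProd G H).edgeBoundary A).ncard := by
  by_cases hsplit : ∃ u v v', (u, v) ∈ A ∧ (u, v') ∉ A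
  · obtain ⟨u, v, v', hv, hv'⟩ := hsplit
    refine min_le_of_right_le ?_
    rcases le_total (Prod.mk u ⁻¹' A).ncard (Prod.mk u ⁻¹' A)ᶜ.ncard with hA | hA
    · exact minDeg_add_le_ncard_edgeBoundary_lexProd G H hδ hv hA
    · rw [← ncard_edgeBoundary_compl]
      refine minDeg_add_le_ncard_edgeBoundary_lexProd G H hδ (A := Aᶜ) hv' ?_
      rwa [Set.preimage_compl, compl_compl]
  · push Not at hsplit
    set S := {u | (u, x.2) ∈ A}
    have hA : A = S ×ˢ Set.univ := by
      ext ⟨u, w⟩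
      exact ⟨fun h => ⟨hsplit u w x.2 h, trivial⟩, fun h => hsplit u x.2 w h.1⟩
    refine min_le_of_left_le ?_
    rw [hA, ncard_edgeBoundary_lexProd_prod_univ]
    exact Nat.mul_le_mul_right _ (edgeConn_le_ncard_edgeBoundary G (x := x.1) (y := y.1) hx
      fun h => hy (hsplit y.1 x.2 y.2 h))

end LexProd

theorem stmt11_general {V W : Type*} [Fintype V] [Fintype W]
    (G : SimpleGraph V) (H : SimpleGraph W)
    (hV : 2 ≤ Fintype.card V) (hW : 2 ≤ Fintype.card W) :
    edgeConn (lexProd G H) =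
      min (edgeConn G * Fintype.card W ^ 2) (minDeg H + minDeg G * Fintype.card W) := by
  have : Nonempty V := Fintype.card_pos_iff.mp (by omega)
  have : Nonempty W := Fintype.card_pos_iff.mp (by omega)
  refine le_antisymm (le_min (edgeConn_lexProd_le G H hV)
    (edgeConn_lexProd_le_minDeg_add G H hW)) ?_
  obtain ⟨A, x, y, hx, hy, hA⟩ := exists_ncard_edgeBoundary_le_edgeConn (lexProd G H)
    (by rw [Fintype.card_prod]; nlinarith)
  refine le_trans ?_ hA
  rcases Nat.eq_zero_or_pos (minDeg G) with hδ | hδ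
  · obtain ⟨u, hu⟩ := exists_degOf_eq_minDeg G
    have : edgeConn G = 0 := by
      have := edgeConn_le_degOf G hV u
      omega
    simp [this]
  · exact min_le_ncard_edgeBoundary_lexProd G H hδ hx hy

theorem stmt11 {V W : Type*} [Fintype V] [Fintype W]
    (G : SimpleGraph V) (H : SimpleGraph W) (hG : G.Connected)
    (hV : 2 ≤ Fintype.card V) (hW : 2 ≤ Fintype.card W) :
    edgeConn (lexProd G H) =
      min (edgeConn G * Fintype.card W ^ 2) (minDeg H + minDeg G * Fintype.card W) :=
  stmt11_general G H hV hW
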